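/- arXiv:2310.17831 — 4 statements merged into one kernel-verified Lean document; each statement's English description precedes it below -/
import Mathlib

section
/- Let p > 1 be a real number and z a complex number with Re(z) > 0. Then the sum over pairs of integers (a, b) with b ≥ 0 and a ≥ −⌊2b/3⌋ of p^{−(a+b)z} converges absolutely and equals (1 − p^{−z})^{−1} · (1 + 3p^{−z}(1 − p^{−z})^{−1}). -/
/-! Grouping the pairs `(a, b)` by `n = a + b`: the condition `a ≥ -⌊2b/3⌋` becomes `⌈b/3⌉ ≤ n`,
so the fibre over `n` is `0 ≤ b ≤ 3n` and has `3n + 1` points. With `x = p^{-z}`, `‖x‖ < 1`, the sum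
is `∑ (3n + 1) xⁿ = (1 - x)⁻¹ + 3x(1 - x)⁻²`, and the same computation for `‖x‖` gives absolute
convergence. -/

open Complex

theorem hasSum_natCast_mul_add_one_mul_geometric {𝕜 : Type*} [NormedField 𝕜] (k : ℕ) {x : 𝕜}
    (hx : ‖x‖ < 1) :
    HasSum (fun n : ℕ => ((k * n + 1 : ℕ) : 𝕜) * x ^ n)
      ((1 - x)⁻¹ * (1 + k * x * (1 - x)⁻¹)) := by
  have hx1 : 1 - x ≠ 0 := sub_ne_zero.2 fun h => by simp [← h] at hx
  rw [show (1 - x)⁻¹ * (1 + k * x * (1 - x)⁻¹) = k * (x / (1 - x) ^ 2) + (1 - x)⁻¹ by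
    field_simp; ring]
  refine (((hasSum_coe_mul_geometric_of_norm_lt_one hx).mul_left (k : 𝕜)).add
    (hasSum_geometric_of_norm_lt_one hx)).congr_fun fun n => ?_
  push_cast
  ring

theorem hasSum_sigma_fin_pow {𝕜 : Type*} [NormedField 𝕜] [CompleteSpace 𝕜] (k : ℕ) {x : 𝕜}
    (hx : ‖x‖ < 1) :
    HasSum (fun s : Σ n : ℕ, Fin (k * n + 1) => x ^ s.1)
      ((1 - x)⁻¹ * (1 + k * x * (1 - x)⁻¹)) := by
  have hfiber (n : ℕ) :
      HasSum (fun _ : Fin (k * n + 1) => x ^ n) (((k * n + 1 : ℕ) : 𝕜) * x ^ n) := by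
    simpa [nsmul_eq_mul] using hasSum_fintype (fun _ : Fin (k * n + 1) => x ^ n)
  have hnorm : Summable (fun s : Σ n : ℕ, Fin (k * n + 1) => ‖x‖ ^ s.1) := by
    refine (summable_sigma_of_nonneg fun s => by positivity).2
      ⟨fun n => (hasSum_fintype _).summable, ?_⟩
    have hx' : ‖‖x‖‖ < 1 := by rwa [norm_norm]
    refine (hasSum_natCast_mul_add_one_mul_geometric k hx').summable.congr fun n => ?_
    simp [tsum_fintype, nsmul_eq_mul]
  exact (hasSum_natCast_mul_add_one_mul_geometric k hx).sigma_of_hasSum hfiber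
    (.of_norm (by simpa using hnorm))

def sigmaFinEquivCone :
    (Σ n : ℕ, Fin (3 * n + 1)) ≃ {q : ℤ × ℤ // 0 ≤ q.2 ∧ -(2 * q.2 / 3) ≤ q.1} where
  toFun s := ⟨(s.1 - s.2, s.2), by obtain ⟨n, b, hb⟩ := s; dsimp only; omega⟩
  invFun q := ⟨(q.1.1 + q.1.2).toNat, q.1.2.toNat, by
    obtain ⟨⟨a, b⟩, hb, ha⟩ := q
    dsimp only at *
    omega⟩
  left_inv := by
    rintro ⟨n, b, hb⟩
    refine Sigma.ext (by simp) ((Fin.heq_ext_iff (by simp)).2 (by simp))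
  right_inv := by
    rintro ⟨⟨a, b⟩, hb, ha⟩
    ext <;> simp <;> omega

theorem sigmaFinEquivCone_add (s : Σ n : ℕ, Fin (3 * n + 1)) :
    (sigmaFinEquivCone s).1.1 + (sigmaFinEquivCone s).1.2 = s.1 := by
  simp [sigmaFinEquivCone]

theorem norm_ofReal_cpow_neg_lt_one {p : ℝ} (hp : 1 < p) {z : ℂ} (hz : 0 < z.re) :
    ‖(p : ℂ) ^ (-z)‖ < 1 := by
  rw [norm_cpow_eq_rpow_re_of_pos (by linarith), neg_re]
  exact Real.rpow_lt_one_of_one_lt_of_neg hp (neg_neg_of_pos hz)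

open Complex in
theorem local_factor_sum (p : ℝ) (hp : 1 < p) (z : ℂ) (hz : 0 < z.re) :
    Summable (fun q : {q : ℤ × ℤ // 0 ≤ q.2 ∧ -(2 * q.2 / 3) ≤ q.1} =>
      ‖(p : ℂ) ^ (-(((q.1.1 + q.1.2 : ℤ) : ℂ)) * z)‖) ∧
    HasSum (fun q : {q : ℤ × ℤ // 0 ≤ q.2 ∧ -(2 * q.2 / 3) ≤ q.1} =>
      (p : ℂ) ^ (-(((q.1.1 + q.1.2 : ℤ) : ℂ)) * z))
      ((1 - (p : ℂ) ^ (-z))⁻¹ * (1 + 3 * (p : ℂ) ^ (-z) * (1 - (p : ℂ) ^ (-z))⁻¹)) := by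
  have hx := norm_ofReal_cpow_neg_lt_one hp hz
  have hterm (s : Σ n : ℕ, Fin (3 * n + 1)) :
      (p : ℂ) ^ (-((((sigmaFinEquivCone s).1.1 + (sigmaFinEquivCone s).1.2 : ℤ) : ℂ)) * z) =
        ((p : ℂ) ^ (-z)) ^ s.1 := by
    rw [sigmaFinEquivCone_add, Int.cast_natCast, neg_mul_comm, cpow_nat_mul]
  refine ⟨?_, ?_⟩
  · rw [← sigmaFinEquivCone.summable_iff]
    simpa only [Function.comp_def, hterm, norm_pow] using
      (hasSum_sigma_fin_pow 3 (x := ‖(p : ℂ) ^ (-z)‖) (by rwa [norm_norm])).summable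
  · rw [← sigmaFinEquivCone.hasSum_iff]
    simpa only [Function.comp_def, hterm, Nat.cast_ofNat] using hasSum_sigma_fin_pow 3 hx
end

section
/- The ring of C₃-invariant polynomials ℤ[X,Y,Z]^{C₃}, where C₃ acts by cyclically permuting X, Y, Z, is generated as a ℤ-algebra by e₁ = X+Y+Z, e₂ = XY+YZ+ZX, e₃ = XYZ, and δ = X²Y + Y²Z + Z²X. -/
/-!
Write `τ` for the transposition of `X 0` and `X 1`. If `f` is invariant under the 3-cycle, then
`f - τ f` is alternating, so it is divisible by each `X i - X j` (these are pairwise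
non-associated primes, and `2` is not a zero divisor) and hence by the Vandermonde product
`V = (X 0 - X 1) (X 1 - X 2) (X 0 - X 2)`; the cofactor `q` is symmetric. Because
`δ - τ δ = V`, the polynomial `f - δ q` is fixed by the 3-cycle and by `τ`, which generate `S₃`,
so it is symmetric. The fundamental theorem of symmetric polynomials then puts
`f = (f - δ q) + δ q` in the algebra generated by `e₁, e₂, e₃, δ`.
-/

open MvPolynomial Equiv

namespace MvPolynomial

section Substitution

variable {σ R : Type*} [CommRing R]

theorem X_sub_X_ne_zero [Nontrivial R] {i j : σ} (hij : i ≠ j) :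
    (X i - X j : MvPolynomial σ R) ≠ 0 :=
  sub_ne_zero.mpr (X_injective.ne hij)

variable [DecidableEq σ]

/- `rename (Function.update id j i)` substitutes `X i` for `X j`; the next two lemmas say that its
kernel is the ideal generated by `X i - X j`. -/
theorem X_sub_X_dvd_sub_rename_update (i j : σ) (f : MvPolynomial σ R) :
    X i - X j ∣ f - rename (Function.update id j i) f := by
  rw [← Ideal.mem_span_singleton, ← Ideal.Quotient.eq]
  let π := Ideal.Quotient.mkₐ R (Ideal.span {(X i - X j : MvPolynomial σ R)})
  suffices π.comp (rename (Function.update id j i)) = π from (congrArg (· f) this).symm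
  ext k
  by_cases hk : k = j
  · subst hk
    simp [π, Ideal.Quotient.eq]
  · simp [π, hk]

theorem X_sub_X_dvd_iff_rename_update_eq_zero (i j : σ) (f : MvPolynomial σ R) :
    X i - X j ∣ f ↔ rename (Function.update id j i) f = 0 := by
  constructor
  · rintro ⟨q, rfl⟩
    simp [Function.update_apply]
  · intro h
    simpa [h] using X_sub_X_dvd_sub_rename_update i j f

theorem prime_X_sub_X [IsDomain R] {i j : σ} (hij : i ≠ j) :
    Prime (X i - X j : MvPolynomial σ R) := by
  rw [← Ideal.span_singleton_prime (X_sub_X_ne_zero hij)]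
  have hker : Ideal.span {(X i - X j : MvPolynomial σ R)} =
      RingHom.ker (rename (R := R) (Function.update id j i)) := Ideal.ext fun f => by
    rw [Ideal.mem_span_singleton, RingHom.mem_ker]
    exact X_sub_X_dvd_iff_rename_update_eq_zero i j f
  rw [hker]
  exact RingHom.ker_isPrime _

theorem X_sub_X_dvd_of_dvd_mul [IsDomain R] {i j : σ} (hij : i ≠ j) {a b : MvPolynomial σ R}
    (hab : X i - X j ∣ a * b) (ha : rename (Function.update id j i) a ≠ 0) : X i - X j ∣ b :=
  ((prime_X_sub_X hij).dvd_or_dvd hab).resolve_left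
    ((X_sub_X_dvd_iff_rename_update_eq_zero i j a).not.mpr ha)

theorem X_sub_X_dvd_of_rename_swap_eq_neg [IsDomain R] [CharZero R] {i j : σ}
    {g : MvPolynomial σ R} (hg : rename (swap i j) g = -g) : X i - X j ∣ g := by
  rw [X_sub_X_dvd_iff_rename_update_eq_zero, ← self_eq_neg]
  have hcomp : Function.update id j i ∘ swap i j = Function.update id j i := by
    funext k
    by_cases hki : k = i <;> by_cases hkj : k = j <;>
      simp [Function.update_apply, swap_apply_def, hki, hkj]
  conv_lhs => rw [← hcomp, ← rename_rename, hg, map_neg]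

end Substitution

section Alternating

variable {σ R : Type*} [CommRing R]

theorem rename_eq_smul_of_mem_closure (χ : Perm σ →* ℤˣ) {S : Set (Perm σ)}
    {p : MvPolynomial σ R} (hS : ∀ e ∈ S, rename e p = χ e • p) {e : Perm σ}
    (he : e ∈ Subgroup.closure S) : rename e p = χ e • p := by
  induction he using Subgroup.closure_induction with
  | mem e he => exact hS e he
  | one => simp
  | mul e f _ _ he hf =>
    rw [Perm.coe_mul, ← rename_rename, hf, Units.smul_def, map_zsmul, he, map_mul, mul_comm,
      mul_smul]
    rfl
  | inv e _ he =>
    have h := congrArg (rename ⇑e⁻¹) he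
    rw [rename_rename, Units.smul_def, map_zsmul, ← Perm.coe_mul, inv_mul_cancel,
      Perm.coe_one, rename_id, AlgHom.id_apply, ← Units.smul_def] at h
    rw [map_inv, eq_inv_smul_iff, ← h]

theorem isSymmetric_of_closure_eq_top {S : Set (Perm σ)} (hS : Subgroup.closure S = ⊤)
    {p : MvPolynomial σ R} (h : ∀ e ∈ S, rename e p = p) : p.IsSymmetric := fun e => by
  simpa using rename_eq_smul_of_mem_closure 1 (by simpa using h) (hS ▸ Subgroup.mem_top e)

variable [Fintype σ] [DecidableEq σ]

def IsAlternating (p : MvPolynomial σ R) : Prop :=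
  ∀ e : Perm σ, rename e p = Perm.sign e • p

theorem isAlternating_of_closure_eq_top {S : Set (Perm σ)} (hS : Subgroup.closure S = ⊤)
    {p : MvPolynomial σ R} (h : ∀ e ∈ S, rename e p = Perm.sign e • p) : IsAlternating p :=
  fun e => rename_eq_smul_of_mem_closure Perm.sign h (hS ▸ Subgroup.mem_top e)

theorem IsAlternating.isSymmetric_of_mul [IsDomain R] {a b : MvPolynomial σ R}
    (ha : IsAlternating a) (ha0 : a ≠ 0) (hab : IsAlternating (a * b)) : b.IsSymmetric := by
  intro e
  apply mul_left_cancel₀ ha0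
  have h := hab e
  rw [map_mul, ha e, smul_mul_assoc] at h
  exact MulAction.injective (Perm.sign e) h

theorem IsAlternating.X_sub_X_dvd [IsDomain R] [CharZero R] {g : MvPolynomial σ R}
    (hg : IsAlternating g) {i j : σ} (hij : i ≠ j) : X i - X j ∣ g :=
  X_sub_X_dvd_of_rename_swap_eq_neg (by rw [hg, Perm.sign_swap hij, Units.neg_smul, one_smul])

end Alternating

theorem IsSymmetric.mem_adjoin_esymm {σ R : Type*} [CommRing R] [Fintype σ]
    {p : MvPolynomial σ R} (hp : p.IsSymmetric) :
    p ∈ Algebra.adjoin R (esymm σ R '' Set.Icc 1 (Fintype.card σ)) := by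
  obtain ⟨q, hq⟩ := esymmAlgHom_surjective R le_rfl ⟨p, hp⟩
  have hpq : p = aeval (fun i : Fin (Fintype.card σ) ↦ esymm σ R (i + 1)) q := by
    rw [← esymmAlgHom_apply, hq]
  have hrange :
      p ∈ Algebra.adjoin R (Set.range fun i : Fin (Fintype.card σ) ↦ esymm σ R (i + 1)) := by
    rw [Algebra.adjoin_range_eq_range_aeval, hpq]
    exact ⟨q, rfl⟩
  refine Algebra.adjoin_mono ?_ hrange
  rintro _ ⟨i, rfl⟩
  exact ⟨i + 1, ⟨by omega, i.isLt⟩, rfl⟩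

section FinThree

variable {R : Type*} [CommRing R]

theorem esymm_one_fin_three : esymm (Fin 3) R 1 = X 0 + X 1 + X 2 := by
  simp [esymm_one, Fin.sum_univ_three]

theorem esymm_two_fin_three : esymm (Fin 3) R 2 = X 0 * X 1 + X 1 * X 2 + X 2 * X 0 := by
  simp [esymm_eq_multiset_esymm, Multiset.esymm, Fin.univ_val_map, Multiset.powersetCard_coe,
    List.sublistsLen, List.sublistsLenAux]
  ring

theorem esymm_three_fin_three : esymm (Fin 3) R 3 = X 0 * X 1 * X 2 := by
  simp [esymm_eq_multiset_esymm, Multiset.esymm, Fin.univ_val_map, Multiset.powersetCard_coe,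
    List.sublistsLen, List.sublistsLenAux, mul_assoc]

theorem closure_finRotate_three_swap_zero_one :
    Subgroup.closure {finRotate 3, swap (0 : Fin 3) 1} = ⊤ :=
  Perm.closure_cycle_adjacent_swap isCycle_finRotate support_finRotate 0

theorem isAlternating_vandermonde_three :
    IsAlternating ((X 0 - X 1) * (X 1 - X 2) * (X 0 - X 2) : MvPolynomial (Fin 3) R) := by
  apply isAlternating_of_closure_eq_top closure_finRotate_three_swap_zero_one
  rintro e (rfl | rfl)
  · rw [show Perm.sign (finRotate 3) = 1 by decide, one_smul]
    simp only [map_mul, map_sub, rename_X, finRotate_apply, zero_add, Fin.reduceAdd]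
    ring
  · rw [Perm.sign_swap (by decide), Units.neg_smul, one_smul]
    simp only [map_mul, map_sub, rename_X, swap_apply_left, swap_apply_right, ne_eq,
      Fin.reduceEq, not_false_eq_true, swap_apply_of_ne_of_ne]
    ring

theorem IsAlternating.vandermonde_three_dvd [IsDomain R] [CharZero R]
    {g : MvPolynomial (Fin 3) R} (hg : IsAlternating g) :
    (X 0 - X 1) * (X 1 - X 2) * (X 0 - X 2) ∣ g := by
  obtain ⟨a, rfl⟩ := hg.X_sub_X_dvd (show (0 : Fin 3) ≠ 1 by decide)
  obtain ⟨b, rfl⟩ : X 1 - X 2 ∣ a := by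
    refine X_sub_X_dvd_of_dvd_mul (by decide) (hg.X_sub_X_dvd (by decide)) ?_
    simpa [Function.update_apply] using X_sub_X_ne_zero (R := R) (show (0 : Fin 3) ≠ 1 by decide)
  obtain ⟨c, rfl⟩ : X 0 - X 2 ∣ b := by
    refine X_sub_X_dvd_of_dvd_mul (a := (X 0 - X 1) * (X 1 - X 2)) (by decide)
      (by simpa [mul_assoc] using hg.X_sub_X_dvd (show (0 : Fin 3) ≠ 2 by decide)) ?_
    have h01 := X_sub_X_ne_zero (R := R) (show (0 : Fin 3) ≠ 1 by decide)
    have h10 := X_sub_X_ne_zero (R := R) (show (1 : Fin 3) ≠ 0 by decide)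
    simpa [Function.update_apply] using mul_ne_zero h01 h10
  exact ⟨c, by ring⟩

theorem exists_isSymmetric_add_mul_of_rename_finRotate_eq [IsDomain R] [CharZero R]
    {f : MvPolynomial (Fin 3) R} (hf : rename (finRotate 3) f = f) :
    ∃ p q : MvPolynomial (Fin 3) R, p.IsSymmetric ∧ q.IsSymmetric ∧
      f = p + (X 0 ^ 2 * X 1 + X 1 ^ 2 * X 2 + X 2 ^ 2 * X 0) * q := by
  set τ : Perm (Fin 3) := swap 0 1
  have hτf : rename (finRotate 3) (rename τ f) = rename τ f := by
    rw [rename_rename, show ⇑(finRotate 3) ∘ ⇑τ = τ ∘ finRotate 3 ∘ finRotate 3 by decide,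
      ← rename_rename, ← rename_rename, hf, hf]
  have hττ : rename τ (rename τ f) = f := by
    rw [rename_rename, show ⇑τ ∘ ⇑τ = id by decide, rename_id, AlgHom.id_apply]
  have hδc : rename (finRotate 3) (X 0 ^ 2 * X 1 + X 1 ^ 2 * X 2 + X 2 ^ 2 * X 0 :
      MvPolynomial (Fin 3) R) = X 0 ^ 2 * X 1 + X 1 ^ 2 * X 2 + X 2 ^ 2 * X 0 := by
    simp only [map_add, map_mul, map_pow, rename_X, finRotate_apply, zero_add, Fin.reduceAdd]
    ring
  -- `δ` absorbs the alternating part of `f` because `δ - τ δ` is the Vandermonde product.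
  have hδτ : rename τ (X 0 ^ 2 * X 1 + X 1 ^ 2 * X 2 + X 2 ^ 2 * X 0 : MvPolynomial (Fin 3) R) =
      X 0 ^ 2 * X 1 + X 1 ^ 2 * X 2 + X 2 ^ 2 * X 0 - (X 0 - X 1) * (X 1 - X 2) * (X 0 - X 2) := by
    simp only [map_add, map_mul, map_pow, rename_X, τ, swap_apply_left, swap_apply_right, ne_eq,
      Fin.reduceEq, not_false_eq_true, swap_apply_of_ne_of_ne]
    ring
  have hg : IsAlternating (f - rename τ f) := by
    apply isAlternating_of_closure_eq_top closure_finRotate_three_swap_zero_one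
    rintro e (rfl | rfl)
    · rw [show Perm.sign (finRotate 3) = 1 by decide, one_smul, map_sub, hf, hτf]
    · rw [Perm.sign_swap (by decide), Units.neg_smul, one_smul, map_sub, hττ, neg_sub]
  obtain ⟨q, hq⟩ := hg.vandermonde_three_dvd
  have hq_symm : q.IsSymmetric :=
    isAlternating_vandermonde_three.isSymmetric_of_mul
      (mul_ne_zero (mul_ne_zero (X_sub_X_ne_zero (by decide)) (X_sub_X_ne_zero (by decide)))
        (X_sub_X_ne_zero (by decide))) (hq ▸ hg)
  refine ⟨f - (X 0 ^ 2 * X 1 + X 1 ^ 2 * X 2 + X 2 ^ 2 * X 0) * q, q, ?_, hq_symm, by ring⟩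
  apply isSymmetric_of_closure_eq_top closure_finRotate_three_swap_zero_one
  rintro e (rfl | rfl)
  · rw [map_sub, map_mul, hf, hδc, hq_symm]
  · rw [map_sub, map_mul, hδτ, hq_symm]
    linear_combination -hq

end FinThree

end MvPolynomial

open MvPolynomial in
theorem cyclic_invariants_generators :
    (Algebra.adjoin ℤ
      ({X 0 + X 1 + X 2,
        X 0 * X 1 + X 1 * X 2 + X 2 * X 0,
        X 0 * X 1 * X 2,
        X 0 ^ 2 * X 1 + X 1 ^ 2 * X 2 + X 2 ^ 2 * X 0} :
        Set (MvPolynomial (Fin 3) ℤ)) : Set (MvPolynomial (Fin 3) ℤ)) =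
    {f : MvPolynomial (Fin 3) ℤ | rename (⇑(finRotate 3)) f = f} := by
  ext f
  constructor
  · intro hf
    refine (Algebra.adjoin_le ?_ :
      _ ≤ AlgHom.equalizer (rename (finRotate 3)) (AlgHom.id ℤ _)) hf
    rintro _ (rfl | rfl | rfl | rfl) <;>
      simp only [SetLike.mem_coe, AlgHom.mem_equalizer, AlgHom.id_apply, map_add, map_mul,
        map_pow, rename_X, finRotate_apply, zero_add, Fin.reduceAdd] <;> ring
  · intro hf
    obtain ⟨p, q, hp, hq, rfl⟩ := exists_isSymmetric_add_mul_of_rename_finRotate_eq hf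
    refine add_mem (Algebra.adjoin_mono ?_ hp.mem_adjoin_esymm)
      (mul_mem (Algebra.subset_adjoin (by simp)) (Algebra.adjoin_mono ?_ hq.mem_adjoin_esymm))
    all_goals
      rintro _ ⟨k, ⟨hk1, hk3⟩, rfl⟩
      rw [Fintype.card_fin] at hk3
      interval_cases k <;>
        simp only [esymm_one_fin_three, esymm_two_fin_three, esymm_three_fin_three] <;> simp
end

section
/- Let z ∈ ℚ₃(ζ)× (where ζ is a primitive cube root of unity, and ℚ₃(ζ)/ℚ₃ is the ramified quadratic extension) with norm N and trace T over ℚ₃. If N ∈ 1 + 3ℤ₃ and N(3 − T) ∈ 1 + 27ℤ₃, then z ∈ 1 + 3O, where O is the valuation ring. Conversely, if z ∈ 1 + 3O then N ∈ 1 + 3ℤ₃ and N(3 − T) ∈ 1 + 27ℤ₃. -/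
/-!
Write `z = a + bζ` with `ζ² + ζ + 1 = 0`; then `N z = a² - ab + b²` and `T z = 2a - b`.
Since `3b² = 4N - T²`, `2a = T + b` and `3b²` has odd valuation, `a + bζ` is integral exactly
when `a, b ∈ ℤ₃`. Under the hypotheses `N` is a unit and `T` is integral, so `a, b ∈ ℤ₃`, and
`N (T - 2) = 3n - 27τ`, `N (1 - T + N) = 9n² + 27τ` give `3 ∣ T - 2` and `9 ∣ 1 - T + N`.
These are the trace and norm of `z - 1 = (a - 1) + bζ`, and `3b² = 4N - T²` applied to `z - 1`
yields `3 ∣ b`, then `3 ∣ a - 1`. Conversely, for `a = 1 + 3e`, `b = 3f` both congruences are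
polynomial identities.
-/

noncomputable instance : Algebra ℤ_[3] (CyclotomicField 3 ℚ_[3]) :=
  ((algebraMap ℚ_[3] (CyclotomicField 3 ℚ_[3])).comp
    (algebraMap ℤ_[3] ℚ_[3])).toAlgebra

open Polynomial

theorem dvd_of_norm_form_congr {R : Type*} [CommRing R] [IsDomain R] (h3 : Prime (3 : R))
    {a b n τ : R} (hN : a ^ 2 - a * b + b ^ 2 = 1 + 3 * n)
    (hτ : (a ^ 2 - a * b + b ^ 2) * (3 - (2 * a - b)) = 1 + 27 * τ) :
    3 ∣ a - 1 ∧ 3 ∣ b := by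
  set N := a ^ 2 - a * b + b ^ 2
  have hN3 : IsCoprime (3 : R) N := ⟨-n, 1, by rw [hN]; ring⟩
  -- the trace `T - 2` and the norm `1 - T + N` of `(a - 1) + bζ`, where `T = 2a - b`
  have h_trace : 3 ∣ 2 * (a - 1) - b :=
    hN3.dvd_of_dvd_mul_left ⟨n - 9 * τ, by linear_combination hN - hτ⟩
  have h_norm : 9 ∣ (a - 1) ^ 2 - (a - 1) * b + b ^ 2 := by
    rw [show (9 : R) = 3 ^ 2 by norm_num]
    exact hN3.pow_left.dvd_of_dvd_mul_left
      ⟨n ^ 2 + 3 * τ, by linear_combination (N - 1 + 3 * n) * hN + hτ⟩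
  have hb : 3 ∣ b := by
    refine h3.dvd_of_dvd_pow (n := 2) ((mul_dvd_mul_iff_left h3.ne_zero).mp ?_)
    have h9 := pow_dvd_pow_of_dvd h_trace 2
    rw [show (3 : R) ^ 2 = 9 by norm_num] at h9
    convert dvd_sub (dvd_mul_of_dvd_right h_norm 4) h9 using 1 <;> ring
  have ha : 3 ∣ 2 * (a - 1) := by simpa using dvd_add h_trace hb
  exact ⟨(show IsCoprime (3 : R) 2 from ⟨1, -1, by ring⟩).dvd_of_dvd_mul_left ha, hb⟩

theorem norm_form_congr_of_dvd {R : Type*} [CommRing R] (e f : R) :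
    (∃ n, (1 + 3 * e) ^ 2 - (1 + 3 * e) * (3 * f) + (3 * f) ^ 2 = 1 + 3 * n) ∧
      ∃ τ, ((1 + 3 * e) ^ 2 - (1 + 3 * e) * (3 * f) + (3 * f) ^ 2) *
        (3 - (2 * (1 + 3 * e) - 3 * f)) = 1 + 27 * τ :=
  ⟨⟨2 * e - f + 3 * e ^ 2 - 3 * e * f + 3 * f ^ 2, by ring⟩,
    ⟨e * f - e ^ 2 + (e ^ 2 - e * f + f ^ 2) * (f - 2 * e), by ring⟩⟩

@[simp, norm_cast]
theorem PadicInt.coe_ofNat {p : ℕ} [Fact p.Prime] (n : ℕ) [n.AtLeastTwo] :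
    ((ofNat(n) : ℤ_[p]) : ℚ_[p]) = ofNat(n) :=
  rfl

theorem Padic.norm_le_one_of_isIntegral {p : ℕ} [Fact p.Prime] {x : ℚ_[p]}
    (hx : IsIntegral ℤ_[p] x) : ‖x‖ ≤ 1 := by
  obtain ⟨y, rfl⟩ := IsIntegrallyClosed.isIntegral_iff.mp hx
  exact y.norm_le_one

theorem Padic.norm_le_zpow_of_sq_lt {p : ℕ} [Fact p.Prime] {x : ℚ_[p]} {n : ℤ}
    (h : ‖x‖ ^ 2 < (p : ℝ) ^ (2 * n + 2)) : ‖x‖ ≤ (p : ℝ) ^ n := by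
  rw [Padic.norm_le_pow_iff_norm_lt_pow_add_one]
  by_contra! hle
  have : ((p : ℝ) ^ (n + 1)) ^ 2 ≤ ‖x‖ ^ 2 := pow_le_pow_left₀ (by positivity) hle 2
  rw [← zpow_natCast, ← zpow_mul, show (n + 1) * ((2 : ℕ) : ℤ) = 2 * n + 2 by push_cast; ring]
    at this
  exact (h.trans_le this).false

namespace CyclotomicThree

local notation "K" => CyclotomicField 3 ℚ_[3]
local notation "ζ" => IsCyclotomicExtension.zeta 3 ℚ_[3] K

theorem norm_two : ‖(2 : ℚ_[3])‖ = 1 := by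
  simpa using (Padic.norm_natCast_eq_one_iff (p := 3) (n := 2)).mpr (by decide)

theorem norm_three : ‖(3 : ℚ_[3])‖ = 3⁻¹ := by
  simpa using Padic.norm_p (p := 3)

theorem norm_one_add_three_mul (m : ℤ_[3]) : ‖1 + 3 * (m : ℚ_[3])‖ = 1 := by
  have h3m : ‖3 * (m : ℚ_[3])‖ < 1 := by
    rw [norm_mul, norm_three]
    nlinarith [m.2, norm_nonneg (m : ℚ_[3])]
  rw [Padic.add_eq_max_of_ne (by rw [norm_one]; exact h3m.ne'), norm_one, max_eq_left h3m.le]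

theorem irreducible_cyclotomic_three : Irreducible (cyclotomic 3 ℚ_[3]) := by
  rw [irreducible_iff_roots_eq_zero_of_degree_le_three
      (by rw [natDegree_cyclotomic]; decide) (by rw [natDegree_cyclotomic]; decide),
    Multiset.eq_zero_iff_forall_notMem]
  intro r hr
  rw [mem_roots (cyclotomic_ne_zero 3 ℚ_[3]), IsRoot, cyclotomic_three] at hr
  simp only [eval_add, eval_pow, eval_X, eval_one] at hr
  -- a root would give `(2r + 1)² = -3`, whose valuation is odd
  have hsq : ‖2 * r + 1‖ ^ 2 = 3⁻¹ := by
    rw [← norm_pow, show (2 * r + 1) ^ 2 = -3 by linear_combination 4 * hr, norm_neg, norm_three]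
  have := Padic.norm_le_zpow_of_sq_lt (p := 3) (n := -1) (x := 2 * r + 1) (by norm_num [hsq])
  norm_num at this
  nlinarith [norm_nonneg (2 * r + 1)]

theorem zeta_sq_add_zeta_add_one : ζ ^ 2 + ζ + 1 = 0 := by
  simpa [cyclotomic_three] using
    (IsCyclotomicExtension.zeta_spec 3 ℚ_[3] K).isRoot_cyclotomic (by norm_num)

theorem finrank_eq_two : Module.finrank ℚ_[3] K = 2 :=
  IsCyclotomicExtension.finrank K irreducible_cyclotomic_three

instance : FiniteDimensional ℚ_[3] K := IsCyclotomicExtension.finiteDimensional {3} ℚ_[3] K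

-- `CyclotomicField` carries its own `SMul ℤ_[3]` instance, distinct from the one of the algebra.
instance : @IsScalarTower ℤ_[3] ℚ_[3] K _ _ Algebra.toSMul := IsScalarTower.of_algebraMap_eq' rfl

noncomputable def basis : Module.Basis (Fin 2) ℚ_[3] K :=
  let pb := (IsCyclotomicExtension.zeta_spec 3 ℚ_[3] K).powerBasis ℚ_[3]
  pb.basis.reindex (finCongr (pb.finrank.symm.trans finrank_eq_two))

theorem basis_apply (i : Fin 2) : basis i = ζ ^ (i : ℕ) := by
  simp [basis]

noncomputable def ofCoords (a b : ℚ_[3]) : K :=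
  algebraMap ℚ_[3] K a + algebraMap ℚ_[3] K b * ζ

theorem ofCoords_eq_equivFun_symm (a b : ℚ_[3]) :
    ofCoords a b = basis.equivFun.symm ![a, b] := by
  simp [ofCoords, basis_apply, Algebra.smul_def]

theorem repr_ofCoords (a b : ℚ_[3]) : ⇑(basis.repr (ofCoords a b)) = ![a, b] := by
  rw [ofCoords_eq_equivFun_symm, ← basis.equivFun_apply, LinearEquiv.apply_symm_apply]

theorem exists_eq_ofCoords (z : K) : ∃ a b : ℚ_[3], z = ofCoords a b := by
  refine ⟨basis.repr z 0, basis.repr z 1, basis.repr.injective (Finsupp.ext fun i => ?_)⟩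
  rw [repr_ofCoords]
  fin_cases i <;> rfl

theorem one_add_three_mul_ofCoords (a b : ℚ_[3]) :
    1 + 3 * ofCoords a b = ofCoords (1 + 3 * a) (3 * b) := by
  simp only [ofCoords, map_add, map_mul, map_one, map_ofNat]
  ring

theorem leftMulMatrix_ofCoords (a b : ℚ_[3]) :
    Algebra.leftMulMatrix basis (ofCoords a b) = !![a, -b; b, a - b] := by
  have h_mul_zeta : ofCoords a b * ζ = ofCoords (-b) (a - b) := by
    simp only [ofCoords, map_neg, map_sub]
    linear_combination (algebraMap ℚ_[3] K b) * zeta_sq_add_zeta_add_one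
  ext i j
  fin_cases i <;> fin_cases j <;>
    simp [Algebra.leftMulMatrix_eq_repr_mul, basis_apply, h_mul_zeta, repr_ofCoords]

theorem norm_ofCoords (a b : ℚ_[3]) :
    Algebra.norm ℚ_[3] (ofCoords a b) = a ^ 2 - a * b + b ^ 2 := by
  rw [Algebra.norm_eq_matrix_det basis, leftMulMatrix_ofCoords, Matrix.det_fin_two_of]
  ring

theorem trace_ofCoords (a b : ℚ_[3]) : Algebra.trace ℚ_[3] K (ofCoords a b) = 2 * a - b := by
  rw [Algebra.trace_eq_matrix_trace basis, leftMulMatrix_ofCoords, Matrix.trace_fin_two_of]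
  ring

theorem norm_le_one_of_norm_trace_le_one {a b : ℚ_[3]} (hT : ‖2 * a - b‖ ≤ 1)
    (hN : ‖a ^ 2 - a * b + b ^ 2‖ ≤ 1) : ‖a‖ ≤ 1 ∧ ‖b‖ ≤ 1 := by
  have h4 : ‖(4 : ℚ_[3])‖ ≤ 1 := by exact_mod_cast Padic.norm_int_le_one (p := 3) 4
  have h3b : ‖3 * b ^ 2‖ ≤ 1 := by
    rw [show 3 * b ^ 2 = 4 * (a ^ 2 - a * b + b ^ 2) + -(2 * a - b) ^ 2 by ring]
    refine (Padic.nonarchimedean _ _).trans (max_le ?_ ?_)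
    · rw [norm_mul]; exact mul_le_one₀ h4 (norm_nonneg _) hN
    · rw [norm_neg, norm_pow]; exact pow_le_one₀ (norm_nonneg _) hT
  rw [norm_mul, norm_three, norm_pow] at h3b
  have hb : ‖b‖ ≤ 1 := by
    simpa using Padic.norm_le_zpow_of_sq_lt (p := 3) (n := 0) (by norm_num; linarith)
  refine ⟨?_, hb⟩
  have h2a : ‖2 * a‖ ≤ 1 := by
    rw [show 2 * a = (2 * a - b) + b by ring]
    exact (Padic.nonarchimedean _ _).trans (max_le hT hb)
  rwa [norm_mul, norm_two, one_mul] at h2a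

theorem exists_ofCoords_of_norm_trace_le_one {z : K} (hN : ‖Algebra.norm ℚ_[3] z‖ ≤ 1)
    (hT : ‖Algebra.trace ℚ_[3] K z‖ ≤ 1) : ∃ a b : ℤ_[3], z = ofCoords a b := by
  obtain ⟨a, b, rfl⟩ := exists_eq_ofCoords z
  rw [norm_ofCoords] at hN
  rw [trace_ofCoords] at hT
  obtain ⟨ha, hb⟩ := norm_le_one_of_norm_trace_le_one hT hN
  exact ⟨⟨a, ha⟩, ⟨b, hb⟩, rfl⟩

theorem isIntegral_ofCoords (a b : ℤ_[3]) : IsIntegral ℤ_[3] (ofCoords a b) := by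
  have hζ : IsIntegral ℤ_[3] ζ :=
    IsIntegral.of_pow (n := 3) (by norm_num)
      ((IsCyclotomicExtension.zeta_spec 3 ℚ_[3] K).pow_eq_one ▸ isIntegral_one)
  exact (isIntegral_algebraMap (x := a)).add ((isIntegral_algebraMap (x := b)).mul hζ)

theorem isIntegral_iff_exists_ofCoords {y : K} :
    IsIntegral ℤ_[3] y ↔ ∃ a b : ℤ_[3], y = ofCoords a b := by
  refine ⟨fun hy => exists_ofCoords_of_norm_trace_le_one ?_ ?_, ?_⟩
  · exact Padic.norm_le_one_of_isIntegral (Algebra.isIntegral_norm ℚ_[3] hy)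
  · exact Padic.norm_le_one_of_isIntegral (Algebra.isIntegral_trace hy)
  · rintro ⟨a, b, rfl⟩
    exact isIntegral_ofCoords a b

theorem norm_le_one_of_congr {N T : ℚ_[3]} {n τ : ℤ_[3]} (hN : N = 1 + 3 * n)
    (hτ : N * (3 - T) = 1 + 27 * τ) : ‖N‖ ≤ 1 ∧ ‖T‖ ≤ 1 := by
  have hN1 : ‖N‖ = 1 := hN ▸ norm_one_add_three_mul n
  have h3T : ‖T - 3‖ = 1 := by
    have h := congrArg norm hτ
    rwa [norm_mul, hN1, one_mul, norm_sub_rev, show (27 : ℚ_[3]) * τ = 3 * ↑(9 * τ) by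
      push_cast; ring, norm_one_add_three_mul] at h
  refine ⟨hN1.le, ?_⟩
  rw [show T = 3 + (T - 3) by ring]
  refine (Padic.nonarchimedean _ _).trans (max_le ?_ h3T.le)
  rw [norm_three]
  norm_num

end CyclotomicThree

open CyclotomicThree

theorem local_support_at_three_general (z : CyclotomicField 3 ℚ_[3]) :
    ((∃ n : ℤ_[3], Algebra.norm ℚ_[3] z = 1 + 3 * (n : ℚ_[3])) ∧
      (∃ τ : ℤ_[3], Algebra.norm ℚ_[3] z *
          (3 - Algebra.trace ℚ_[3] (CyclotomicField 3 ℚ_[3]) z) = 1 + 27 * (τ : ℚ_[3]))) ↔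
    ∃ y : CyclotomicField 3 ℚ_[3], IsIntegral ℤ_[3] y ∧ z = 1 + 3 * y := by
  constructor
  · rintro ⟨⟨n, hN⟩, ⟨τ, hτ⟩⟩
    obtain ⟨hN1, hT1⟩ := norm_le_one_of_congr hN hτ
    obtain ⟨a, b, rfl⟩ := exists_ofCoords_of_norm_trace_le_one hN1 hT1
    rw [norm_ofCoords] at hN hτ
    rw [trace_ofCoords] at hτ
    obtain ⟨⟨e, he⟩, ⟨f, rfl⟩⟩ := dvd_of_norm_form_congr PadicInt.prime_p
      (PadicInt.ext (by push_cast; exact hN)) (PadicInt.ext (by push_cast; exact hτ))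
    refine ⟨ofCoords e f, isIntegral_ofCoords e f, ?_⟩
    rw [one_add_three_mul_ofCoords, eq_add_of_sub_eq' he]
    push_cast
    rfl
  · rintro ⟨y, hy, rfl⟩
    obtain ⟨e, f, rfl⟩ := isIntegral_iff_exists_ofCoords.mp hy
    obtain ⟨⟨n, hn⟩, ⟨τ, hτ⟩⟩ := norm_form_congr_of_dvd e f
    rw [one_add_three_mul_ofCoords, norm_ofCoords, trace_ofCoords]
    exact ⟨⟨n, by exact_mod_cast congrArg ((↑) : ℤ_[3] → ℚ_[3]) hn⟩,
      ⟨τ, by exact_mod_cast congrArg ((↑) : ℤ_[3] → ℚ_[3]) hτ⟩⟩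

theorem local_support_at_three (z : CyclotomicField 3 ℚ_[3]) (hz : z ≠ 0) :
    ((∃ n : ℤ_[3], Algebra.norm ℚ_[3] z = 1 + 3 * (n : ℚ_[3])) ∧
      (∃ τ : ℤ_[3], Algebra.norm ℚ_[3] z *
          (3 - Algebra.trace ℚ_[3] (CyclotomicField 3 ℚ_[3]) z) = 1 + 27 * (τ : ℚ_[3]))) ↔
    ∃ y : CyclotomicField 3 ℚ_[3], IsIntegral ℤ_[3] y ∧ z = 1 + 3 * y :=
  local_support_at_three_general z
end

section
/- Define the multiplicative arithmetic function d(n) for positive integers n coprime to 3 by d(n) = Σ_{k | n} 3^{ω(P₁(k))}(−1)^{Ω(P₂(k))}, where P_j(k) is the largest divisor of k divisible only by primes ≡ j (mod 3), ω counts distinct prime factors, and Ω counts prime factors with multiplicity. Then for Re(z) > 1, Σ_{n ≥ 1, 3∤n} d(n) n^{−z} = (1 − 3^{−z})² ζ_{ℚ(√−3)}(z)² ∏_{q≡2(3)}(1 − q^{−2z}) ∏_{p≡1(3)}(1 − 3p^{−2z} + 2p^{−3z}). -/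
open ArithmeticFunction in
/-- `Ppart j k` is the largest divisor of `k` divisible only by primes `≡ j (mod 3)`. -/
def Ppart (j k : ℕ) : ℕ :=
  k.factorization.prod fun p e => if p % 3 = j then p ^ e else 1

open ArithmeticFunction in
/-- `d n = Σ_{k | n} 3^{ω(P₁(k))} (−1)^{Ω(P₂(k))}`. -/
def dFun (n : ℕ) : ℤ :=
  ∑ k ∈ n.divisors, 3 ^ (cardDistinctFactors (Ppart 1 k)) *
    (-1 : ℤ) ^ (cardFactors (Ppart 2 k))


open ArithmeticFunction Nat LSeries Complex
open scoped LSeries.notation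
open scoped ArithmeticFunction.omega ArithmeticFunction.Omega ArithmeticFunction.zeta


lemma Ppart_one (j : ℕ) : Ppart j 1 = 1 := by simp [Ppart]

lemma Ppart_ne_zero (j k : ℕ) : Ppart j k ≠ 0 := by
  rw [Ppart, Finsupp.prod]
  refine Finset.prod_ne_zero_iff.mpr fun p hp => ?_
  have hp' : p.Prime := Nat.prime_of_mem_primeFactors (by simpa using hp)
  split
  · exact pow_ne_zero _ hp'.ne_zero
  · exact one_ne_zero

lemma Ppart_dvd (j : ℕ) {k : ℕ} (hk : k ≠ 0) : Ppart j k ∣ k := by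
  conv_rhs => rw [← Nat.factorization_prod_pow_eq_self hk]
  rw [Ppart, Finsupp.prod, Finsupp.prod]
  exact Finset.prod_dvd_prod_of_dvd _ _ fun p hp => by
    split
    · exact dvd_rfl
    · exact one_dvd _

lemma Ppart_prime_pow {p : ℕ} (hp : p.Prime) (j e : ℕ) :
    Ppart j (p ^ e) = if p % 3 = j then p ^ e else 1 := by
  rw [Ppart, Nat.Prime.factorization_pow hp, Finsupp.prod_single_index (by simp)]

lemma Ppart_mul {m n : ℕ} (hm : m ≠ 0) (hn : n ≠ 0) (j : ℕ) :
    Ppart j (m * n) = Ppart j m * Ppart j n := by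
  rw [Ppart, Nat.factorization_mul hm hn,
    Finsupp.prod_add_index' (fun a => by simp) (fun a b₁ b₂ => by split <;> simp [pow_add]),
    Ppart, Ppart]

lemma omega_apply (n : ℕ) : ω n = n.primeFactors.card := by
  rw [cardDistinctFactors_apply, Nat.primeFactors]
  exact (List.card_toFinset _).symm

lemma omega_mul_coprime {a b : ℕ} (ha : a ≠ 0) (hb : b ≠ 0) (h : Nat.Coprime a b) :
    ω (a * b) = ω a + ω b := by
  rw [omega_apply, omega_apply, omega_apply, Nat.primeFactors_mul ha hb,
    Finset.card_union_of_disjoint h.disjoint_primeFactors]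

lemma omega_le_of_dvd {a b : ℕ} (h : a ∣ b) (hb : b ≠ 0) : ω a ≤ ω b := by
  rw [omega_apply, omega_apply]
  exact Finset.card_le_card (Nat.primeFactors_mono h hb)

noncomputable def gA : ArithmeticFunction ℤ :=
  ⟨fun k => if k = 0 then 0 else 3 ^ (ω (Ppart 1 k)) * (-1 : ℤ) ^ (Ω (Ppart 2 k)), by simp⟩

lemma gA_apply {k : ℕ} (hk : k ≠ 0) :
    gA k = 3 ^ (ω (Ppart 1 k)) * (-1 : ℤ) ^ (Ω (Ppart 2 k)) := by
  simp only [gA, ArithmeticFunction.coe_mk, if_neg hk]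

lemma gA_mult : gA.IsMultiplicative := by
  rw [ArithmeticFunction.IsMultiplicative.iff_ne_zero]
  constructor
  · rw [gA_apply one_ne_zero, Ppart_one, Ppart_one]; simp
  · intro m n hm hn hmn
    rw [gA_apply (Nat.mul_ne_zero hm hn), gA_apply hm, gA_apply hn,
      Ppart_mul hm hn, Ppart_mul hm hn,
      omega_mul_coprime (Ppart_ne_zero 1 m) (Ppart_ne_zero 1 n)
        ((hmn.coprime_dvd_left (Ppart_dvd 1 hm)).coprime_dvd_right (Ppart_dvd 1 hn)),
      cardFactors_mul (Ppart_ne_zero 2 m) (Ppart_ne_zero 2 n)]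
    ring

/-- `DF = ζ * gA` as arithmetic functions over ℤ. -/
noncomputable def DF : ArithmeticFunction ℤ := ↑ζ * gA

lemma DF_mult : DF.IsMultiplicative := isMultiplicative_zeta.natCast.mul gA_mult

lemma DF_eq_dFun (n : ℕ) : DF n = dFun n := by
  rw [DF, coe_zeta_mul_apply, dFun]
  refine Finset.sum_congr rfl fun k hk => ?_
  rw [gA_apply (Nat.pos_of_mem_divisors hk).ne']

lemma DF_prime_pow_one {p : ℕ} (hp : p.Prime) (h1 : p % 3 = 1) (k : ℕ) :
    DF (p ^ k) = 1 + 3 * k := by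
  rw [DF, coe_zeta_mul_apply, Nat.sum_divisors_prime_pow hp]
  have h2 : p % 3 ≠ 2 := by omega
  have : ∀ x : ℕ, gA (p ^ x) = if x = 0 then 1 else 3 := by
    intro x
    rw [gA_apply (pow_ne_zero _ hp.ne_zero), Ppart_prime_pow hp, Ppart_prime_pow hp,
      if_pos h1, if_neg h2, cardFactors_one]
    rcases eq_or_ne x 0 with rfl | hx
    · simp
    · rw [cardDistinctFactors_apply_prime_pow hp hx, if_neg hx]; ring
  simp only [this]
  rw [Finset.sum_range_succ']
  simp [Finset.sum_ite_eq']
  ring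

lemma DF_prime_pow_two {p : ℕ} (hp : p.Prime) (h2 : p % 3 = 2) (k : ℕ) :
    DF (p ^ k) = if Even k then 1 else 0 := by
  rw [DF, coe_zeta_mul_apply, Nat.sum_divisors_prime_pow hp]
  have h1 : p % 3 ≠ 1 := by omega
  have : ∀ x : ℕ, gA (p ^ x) = (-1) ^ x := by
    intro x
    rw [gA_apply (pow_ne_zero _ hp.ne_zero), Ppart_prime_pow hp, Ppart_prime_pow hp,
      if_pos h2, if_neg h1, cardDistinctFactors_one, cardFactors_apply_prime_pow hp]
    ring
  simp only [this]
  rw [neg_one_geom_sum]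
  by_cases h : Even k <;>
    simp [Nat.even_add_one, Nat.not_even_iff_odd, h, Nat.not_odd_iff_even]

noncomputable def D3 : ArithmeticFunction ℕ := ζ * (ζ * ζ)
noncomputable def D4 : ArithmeticFunction ℕ := ζ * D3

lemma D3_mult : D3.IsMultiplicative :=
  isMultiplicative_zeta.mul (isMultiplicative_zeta.mul isMultiplicative_zeta)

lemma zeta_mul_zeta_prime_pow {p : ℕ} (hp : p.Prime) (e : ℕ) :
    (ζ * ζ : ArithmeticFunction ℕ) (p ^ e) = e + 1 := by
  rw [zeta_mul_apply, Nat.sum_divisors_prime_pow hp]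
  have : ∀ x ∈ Finset.range (e + 1), ζ (p ^ x) = 1 := fun x _ => by
    simp [zeta_apply, pow_ne_zero x hp.ne_zero, hp.ne_zero]
  rw [Finset.sum_congr rfl this]
  simp

lemma one_le_D3 {k : ℕ} (hk : k ≠ 0) : 1 ≤ D3 k := by
  rw [D3, zeta_mul_apply]
  calc 1 = (ζ * ζ : ArithmeticFunction ℕ) 1 := by simp [zeta_mul_apply]
  _ ≤ _ := Finset.single_le_sum (f := fun i => (ζ * ζ : ArithmeticFunction ℕ) i)
      (fun i _ => Nat.zero_le _) (Nat.one_mem_divisors.mpr hk)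

lemma three_le_D3_prime_pow {p : ℕ} (hp : p.Prime) {e : ℕ} (he : e ≠ 0) :
    3 ≤ D3 (p ^ e) := by
  rw [D3, zeta_mul_apply, Nat.sum_divisors_prime_pow hp]
  have : ∀ x ∈ Finset.range (e + 1), (ζ * ζ : ArithmeticFunction ℕ) (p ^ x) = x + 1 :=
    fun x _ => zeta_mul_zeta_prime_pow hp x
  rw [Finset.sum_congr rfl this]
  calc 3 = ∑ x ∈ Finset.range 2, (x + 1) := by decide
  _ ≤ _ := Finset.sum_le_sum_of_subset (by
      intro x hx
      simp only [Finset.mem_range] at *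
      omega)

lemma three_pow_omega_le_D3 {k : ℕ} (hk : k ≠ 0) : 3 ^ (ω k) ≤ D3 k := by
  rw [ArithmeticFunction.IsMultiplicative.multiplicative_factorization D3 D3_mult hk]
  have homega : ω k = k.factorization.support.card := by
    rw [cardDistinctFactors_apply, Nat.support_factorization, Nat.primeFactors]
    exact (List.card_toFinset _).symm
  rw [homega, ← Finset.prod_const, Finsupp.prod]
  refine Finset.prod_le_prod (fun i _ => by omega) fun i hi => ?_
  have hip : i.Prime := Nat.prime_of_mem_primeFactors (by rwa [← Nat.support_factorization])
  exact three_le_D3_prime_pow hip (Finsupp.mem_support_iff.mp hi)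

lemma D3_le_D4 {n : ℕ} (hn : n ≠ 0) : D3 n ≤ D4 n := by
  rw [D4, zeta_mul_apply]
  exact Finset.single_le_sum (f := fun i => D3 i) (fun i _ => Nat.zero_le _)
    (Nat.mem_divisors_self n hn)

lemma one_le_D4 {n : ℕ} (hn : n ≠ 0) : 1 ≤ D4 n := le_trans (one_le_D3 hn) (D3_le_D4 hn)

lemma three_pow_omega_le_D4 {k : ℕ} (hk : k ≠ 0) : 3 ^ (ω k) ≤ D4 k :=
  le_trans (three_pow_omega_le_D3 hk) (D3_le_D4 hk)

lemma abs_dFun_le {n : ℕ} (hn : n ≠ 0) : |dFun n| ≤ (D4 n : ℤ) := by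
  rw [dFun, D4, zeta_mul_apply, Nat.cast_sum]
  refine le_trans (Finset.abs_sum_le_sum_abs _ _) (Finset.sum_le_sum fun k hk => ?_)
  have hk0 : k ≠ 0 := (Nat.pos_of_mem_divisors hk).ne'
  rw [_root_.abs_mul, _root_.abs_pow, _root_.abs_pow, _root_.abs_neg, abs_one, one_pow, mul_one]
  have h1 : |(3 : ℤ)| = 3 := by norm_num
  rw [h1]
  calc (3:ℤ) ^ (ω (Ppart 1 k)) ≤ 3 ^ (ω k) := by
        apply pow_le_pow_right₀ (by norm_num)
        exact omega_le_of_dvd (Ppart_dvd 1 hk0) hk0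
  _ ≤ (D3 k : ℤ) := by exact_mod_cast three_pow_omega_le_D3 hk0

noncomputable def Maj (z : ℂ) (n : ℕ) : ℝ := ‖term (fun m => ((D4 m : ℕ) : ℂ)) z n‖

lemma summable_Maj {z : ℂ} (hz : 1 < z.re) : Summable (Maj z) := by
  have hζ : LSeriesSummable (ζ ·) z := LSeriesSummable_zeta_iff.mpr hz
  have h4 : LSeriesSummable (fun m => ((D4 m : ℕ) : ℂ)) z := by
    have hc : (fun m => ((D4 m : ℕ) : ℂ)) =
        (fun x => ((ζ x : ℕ) : ℂ)) ⍟ ((fun x => ((ζ x : ℕ) : ℂ)) ⍟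
          ((fun x => ((ζ x : ℕ) : ℂ)) ⍟ (fun x => ((ζ x : ℕ) : ℂ)))) := by
      have hzc : (fun x => ((ζ x : ℕ) : ℂ)) =
          ⇑((↑(ArithmeticFunction.zeta) : ArithmeticFunction ℂ)) := by
        funext n; simp [natCoe_apply]
      rw [hzc, ArithmeticFunction.coe_mul, ArithmeticFunction.coe_mul,
        ArithmeticFunction.coe_mul]
      funext m
      simp only [D4, D3, ← natCoe_mul, natCoe_apply]
    exact hc ▸ hζ.convolution (hζ.convolution (hζ.convolution hζ))
  exact summable_norm_iff.mpr h4

lemma Maj_eq (z : ℂ) (n : ℕ) : Maj z n = ‖term (fun m => ((D4 m : ℕ) : ℂ)) z n‖ := rfl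

section F
variable {z : ℂ}

lemma hzne : (1 : ℝ) < z.re → z ≠ 0 := fun h hzz => by simp [hzz] at h; linarith

noncomputable def Ffun (z : ℂ) (n : ℕ) : ℂ :=
  (if 3 ∣ n then 0 else ((DF n : ℤ) : ℂ)) * (n : ℂ) ^ (-z)

lemma Ffun_zero : Ffun z 0 = 0 := by simp [Ffun]

lemma Ffun_one : Ffun z 1 = 1 := by
  simp [Ffun, DF_mult.map_one, (by norm_num : ¬ (3 ∣ 1))]

lemma Ffun_mul (hz0 : z ≠ 0) {m n : ℕ} (h : Nat.Coprime m n) :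
    Ffun z (m * n) = Ffun z m * Ffun z n := by
  have hN : ∀ a b : ℕ, ((a * b : ℕ) : ℂ) ^ (-z) = (a : ℂ) ^ (-z) * (b : ℂ) ^ (-z) := by
    intro a b
    have := map_mul (riemannZetaSummandHom hz0) a b
    simpa [riemannZetaSummandHom] using this
  rcases eq_or_ne m 0 with rfl | hm
  · have hn1 : n = 1 := by simpa using h
    subst hn1; simp [Ffun_zero, Ffun_one]
  rcases eq_or_ne n 0 with rfl | hn
  · have hm1 : m = 1 := by simpa using h
    subst hm1; simp [Ffun_zero, Ffun_one]
  have hdvd : 3 ∣ m * n ↔ 3 ∣ m ∨ 3 ∣ n := (Nat.Prime.dvd_mul Nat.prime_three)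
  rw [Ffun, Ffun, Ffun, hN]
  by_cases h3m : 3 ∣ m
  · rw [if_pos (hdvd.mpr (Or.inl h3m)), if_pos h3m]; ring
  by_cases h3n : 3 ∣ n
  · rw [if_pos (hdvd.mpr (Or.inr h3n)), if_pos h3n]; ring
  · rw [if_neg (by rw [hdvd]; tauto), if_neg h3m, if_neg h3n,
      DF_mult.map_mul_of_coprime h]
    push_cast
    ring

lemma norm_Ffun_le (n : ℕ) : ‖Ffun z n‖ ≤ Maj z n := by
  rcases eq_or_ne n 0 with rfl | hn
  · rw [Ffun_zero]; simp [Maj_eq]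
  rw [Maj_eq z _, norm_term_eq, if_neg hn, Ffun]
  have hnorm : ‖(n : ℂ) ^ (-z)‖ = ((n : ℝ) ^ z.re)⁻¹ := by
    rw [norm_natCast_cpow_of_pos (Nat.pos_of_ne_zero hn), neg_re,
      Real.rpow_neg (Nat.cast_nonneg n)]
  rw [norm_mul, hnorm, div_eq_mul_inv]
  have hD : ‖((D4 n : ℕ) : ℂ)‖ = (D4 n : ℝ) := by
    rw [Complex.norm_natCast]
  rw [hD]
  refine mul_le_mul_of_nonneg_right ?_ (by positivity)
  by_cases h3 : 3 ∣ n
  · rw [if_pos h3]; simp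
  · rw [if_neg h3, Complex.norm_intCast, DF_eq_dFun]
    exact_mod_cast abs_dFun_le hn

lemma summable_Ffun (hz : 1 < z.re) : Summable (fun n => ‖Ffun z n‖) :=
  Summable.of_nonneg_of_le (fun _ => norm_nonneg _) (fun n => norm_Ffun_le (z := z) n)
    (summable_Maj hz)

lemma hasProd_Ffun (hz : 1 < z.re) :
    HasProd (fun p : Nat.Primes => ∑' e, Ffun z (p ^ e)) (∑' n, Ffun z n) :=
  EulerProduct.eulerProduct_hasProd (Ffun_one) (fun h => Ffun_mul (hzne hz) h)
    (summable_Ffun hz) (Ffun_zero)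

-- local sums
lemma cpow_prime_pow (hz0 : z ≠ 0) (p e : ℕ) :
    ((p ^ e : ℕ) : ℂ) ^ (-z) = ((p : ℂ) ^ (-z)) ^ e := by
  have := map_pow (riemannZetaSummandHom hz0) p e
  simpa [riemannZetaSummandHom] using this

lemma not_three_dvd_pow {p : ℕ} (hp : p.Prime) (hne : p ≠ 3) {e : ℕ} :
    ¬ (3 ∣ p ^ e) := fun hdvd => by
  have h3p : 3 ∣ p := Nat.Prime.dvd_of_dvd_pow Nat.prime_three hdvd
  exact hne ((Nat.prime_dvd_prime_iff_eq Nat.prime_three hp).mp h3p).symm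

lemma norm_t_lt_one (hz : 1 < z.re) {p : ℕ} (hp : 1 < p) : ‖(p : ℂ) ^ (-z)‖ < 1 := by
  rw [norm_natCast_cpow_of_pos (by omega)]
  exact Real.rpow_lt_one_of_one_lt_of_neg (by exact_mod_cast hp) (by simp; linarith)

lemma local_sum_three : ∑' e : ℕ, Ffun z ((3 : ℕ) ^ e) = 1 := by
  rw [tsum_eq_single 0 (fun e he => by
    simp [Ffun, dvd_pow_self 3 he])]
  simpa using Ffun_one (z := z)

lemma local_sum_one (hz : 1 < z.re) {p : ℕ} (hp : p.Prime) (h1 : p % 3 = 1) :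
    ∑' e : ℕ, Ffun z (p ^ e) =
      (1 - (p : ℂ) ^ (-z))⁻¹ + 3 * ((p : ℂ) ^ (-z) / (1 - (p : ℂ) ^ (-z)) ^ 2) := by
  have hz0 := hzne hz
  have hne3 : p ≠ 3 := fun h => by rw [h] at h1; norm_num at h1
  set t := (p : ℂ) ^ (-z) with ht
  have hlt : ‖t‖ < 1 := norm_t_lt_one hz hp.one_lt
  have hterm : ∀ e : ℕ, Ffun z (p ^ e) = t ^ e + 3 * ((e : ℂ) * t ^ e) := by
    intro e
    rw [Ffun, if_neg (not_three_dvd_pow hp hne3), DF_prime_pow_one hp h1,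
      cpow_prime_pow hz0]
    push_cast
    ring
  rw [tsum_congr hterm]
  rw [Summable.tsum_add (summable_geometric_of_norm_lt_one hlt)
    (by simpa [pow_one] using
      (summable_pow_mul_geometric_of_norm_lt_one 1 hlt).mul_left (3 : ℂ)),
    tsum_mul_left (a := (3:ℂ)), tsum_geometric_of_norm_lt_one hlt,
    tsum_coe_mul_geometric_of_norm_lt_one hlt]

lemma local_sum_two (hz : 1 < z.re) {p : ℕ} (hp : p.Prime) (h2 : p % 3 = 2) :
    ∑' e : ℕ, Ffun z (p ^ e) = (1 - ((p : ℂ) ^ (-z)) ^ 2)⁻¹ := by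
  have hz0 := hzne hz
  have hne3 : p ≠ 3 := fun h => by rw [h] at h2; norm_num at h2
  set t := (p : ℂ) ^ (-z) with ht
  have hlt : ‖t‖ < 1 := norm_t_lt_one hz hp.one_lt
  have hterm : ∀ e : ℕ, Ffun z (p ^ e) = (if Even e then 1 else 0) * t ^ e := by
    intro e
    rw [Ffun, if_neg (not_three_dvd_pow hp hne3), DF_prime_pow_two hp h2,
      cpow_prime_pow hz0]
    by_cases he : Even e <;> simp [he, ht]
  rw [tsum_congr hterm]
  have hinj : Function.Injective (fun k : ℕ => 2 * k) := fun a b h => by simp only [] at h; omega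
  rw [← Function.Injective.tsum_eq hinj (f := fun e => (if Even e then (1:ℂ) else 0) * t ^ e)
    (by
      intro e he
      rcases Nat.even_or_odd e with h | h
      · obtain ⟨k, hk⟩ := h
        exact ⟨k, show 2 * k = e by omega⟩
      · exfalso
        apply he
        simp [Nat.not_even_iff_odd.mpr h])]
  have : ∀ k : ℕ, (if Even (2 * k) then (1:ℂ) else 0) * t ^ (2 * k) = (t ^ 2) ^ k := by
    intro k
    rw [if_pos (even_two_mul k), pow_mul, one_mul]
  rw [tsum_congr this, tsum_geometric_of_norm_lt_one (by
    rw [norm_pow]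
    exact pow_lt_one₀ (norm_nonneg t) hlt two_ne_zero)]
end F

section W
variable (c : ℕ → ℕ → ℂ)

noncomputable def wf (n : ℕ) : ℂ := if n = 0 then 0 else n.factorization.prod c

lemma wf_zero : wf c 0 = 0 := rfl

lemma wf_one : wf c 1 = 1 := by simp [wf]

lemma wf_mul {m n : ℕ} (h : Nat.Coprime m n) (hm : m ≠ 0) (hn : n ≠ 0) :
    wf c (m * n) = wf c m * wf c n := by
  rw [wf, wf, wf, if_neg (Nat.mul_ne_zero hm hn), if_neg hm, if_neg hn,
    Nat.factorization_mul hm hn, Finsupp.prod_add_index_of_disjoint]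
  rw [Nat.support_factorization, Nat.support_factorization]
  exact h.disjoint_primeFactors

lemma wf_prime_pow {p : ℕ} (hp : p.Prime) {e : ℕ} (he : e ≠ 0) :
    wf c (p ^ e) = c p e := by
  rw [wf, if_neg (pow_ne_zero _ hp.ne_zero), Nat.Prime.factorization_pow hp,
    Finsupp.prod, Finsupp.support_single_ne_zero _ he, Finset.prod_singleton,
    Finsupp.single_eq_same]

lemma norm_wf_le {z : ℂ}
    (hc : ∀ p e : ℕ, p.Prime → e ≠ 0 → ‖c p e‖ ≤ 3 * ((p ^ e : ℕ) : ℝ) ^ (-z.re))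
    (n : ℕ) : ‖wf c n‖ ≤ Maj z n := by
  rcases eq_or_ne n 0 with rfl | hn
  · rw [wf_zero]; simp [Maj_eq]
  rw [Maj_eq, norm_term_eq, if_neg hn, Complex.norm_natCast, wf, if_neg hn]
  have hsup : ∀ p ∈ n.factorization.support, p.Prime := fun p hp =>
    Nat.prime_of_mem_primeFactors (by rwa [← Nat.support_factorization])
  have h1 : ‖n.factorization.prod c‖ ≤
      ∏ p ∈ n.factorization.support, (3 * ((p ^ (n.factorization p) : ℕ) : ℝ) ^ (-z.re)) := by
    rw [Finsupp.prod, norm_prod]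
    refine Finset.prod_le_prod (fun _ _ => norm_nonneg _) fun p hp => ?_
    exact hc p _ (hsup p hp) (Finsupp.mem_support_iff.mp hp)
  refine le_trans h1 ?_
  rw [Finset.prod_mul_distrib, Finset.prod_const]
  have h2 : ∏ p ∈ n.factorization.support, ((p ^ (n.factorization p) : ℕ) : ℝ) ^ (-z.re)
      = ((n : ℝ)) ^ (-z.re) := by
    rw [Real.finset_prod_rpow _ _ (fun p _ => Nat.cast_nonneg _)]
    congr 1
    rw [← Nat.cast_prod]
    congr 1
    exact Nat.factorization_prod_pow_eq_self hn
  rw [h2]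
  have h3 : (3 : ℝ) ^ n.factorization.support.card ≤ (D4 n : ℝ) := by
    have : ω n = n.factorization.support.card := by
      rw [cardDistinctFactors_apply, Nat.support_factorization, Nat.primeFactors]
      exact (List.card_toFinset _).symm
    rw [← this]
    exact_mod_cast three_pow_omega_le_D4 hn
  rw [div_eq_mul_inv, ← Real.rpow_neg (Nat.cast_nonneg n)]
  exact mul_le_mul_of_nonneg_right h3 (by positivity)

lemma summable_wf {z : ℂ} (hz : 1 < z.re)
    (hc : ∀ p e : ℕ, p.Prime → e ≠ 0 → ‖c p e‖ ≤ 3 * ((p ^ e : ℕ) : ℝ) ^ (-z.re)) :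
    Summable (fun n => ‖wf c n‖) :=
  Summable.of_nonneg_of_le (fun _ => norm_nonneg _) (norm_wf_le c hc) (summable_Maj hz)

end W

section AB
variable {z : ℂ}

noncomputable def cA (z : ℂ) (p e : ℕ) : ℂ :=
  if p % 3 = 2 ∧ e = 2 then -((p : ℂ) ^ (-(2 * z))) else 0

noncomputable def cB (z : ℂ) (p e : ℕ) : ℂ :=
  if p % 3 = 1 ∧ e = 2 then -3 * ((p : ℂ) ^ (-(2 * z)))
  else if p % 3 = 1 ∧ e = 3 then 2 * ((p : ℂ) ^ (-(3 * z))) else 0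

noncomputable def Afun (z : ℂ) (p : Nat.Primes) : ℂ :=
  if (p : ℕ) % 3 = 2 then 1 - ((p : ℕ) : ℂ) ^ (-(2 * z)) else 1

noncomputable def Bfun (z : ℂ) (p : Nat.Primes) : ℂ :=
  if (p : ℕ) % 3 = 1 then
    1 - 3 * ((p : ℕ) : ℂ) ^ (-(2 * z)) + 2 * ((p : ℕ) : ℂ) ^ (-(3 * z)) else 1

lemma norm_cpow_neg_mul {p : ℕ} (hp : 0 < p) (k : ℕ) (z : ℂ) :
    ‖(p : ℂ) ^ (-((k : ℂ) * z))‖ = ((p ^ k : ℕ) : ℝ) ^ (-z.re) := by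
  rw [norm_natCast_cpow_of_pos hp]
  push_cast
  rw [← Real.rpow_natCast (p : ℝ) k, ← Real.rpow_mul (Nat.cast_nonneg p)]
  congr 1
  simp [neg_re, mul_re]

lemma hcA (hz : 1 < z.re) :
    ∀ p e : ℕ, p.Prime → e ≠ 0 → ‖cA z p e‖ ≤ 3 * ((p ^ e : ℕ) : ℝ) ^ (-z.re) := by
  intro p e hp he
  rw [cA]
  split
  · next h =>
    obtain ⟨-, rfl⟩ := h
    rw [norm_neg]
    have := norm_cpow_neg_mul hp.pos 2 z
    push_cast at this ⊢
    rw [this]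
    nlinarith [Real.rpow_pos_of_pos (show (0:ℝ) < (p:ℝ)^2 by exact_mod_cast pow_pos hp.pos 2) (-z.re)]
  · simp
    positivity

lemma hcB (hz : 1 < z.re) :
    ∀ p e : ℕ, p.Prime → e ≠ 0 → ‖cB z p e‖ ≤ 3 * ((p ^ e : ℕ) : ℝ) ^ (-z.re) := by
  intro p e hp he
  rw [cB]
  split
  · next h =>
    obtain ⟨-, rfl⟩ := h
    rw [norm_mul]
    have := norm_cpow_neg_mul hp.pos 2 z
    push_cast at this ⊢
    rw [this]
    simp only [norm_neg, Complex.norm_ofNat]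
    nlinarith [Real.rpow_pos_of_pos (show (0:ℝ) < (p:ℝ)^2 by exact_mod_cast pow_pos hp.pos 2) (-z.re)]
  split
  · next h =>
    obtain ⟨-, rfl⟩ := h
    rw [norm_mul]
    have := norm_cpow_neg_mul hp.pos 3 z
    push_cast at this ⊢
    rw [this]
    simp only [Complex.norm_ofNat]
    nlinarith [Real.rpow_pos_of_pos (show (0:ℝ) < (p:ℝ)^3 by exact_mod_cast pow_pos hp.pos 3) (-z.re)]
  · simp
    positivity

lemma local_sum_wA (p : Nat.Primes) : ∑' e : ℕ, wf (cA z) ((p : ℕ) ^ e) = Afun z p := by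
  have hp : (p : ℕ).Prime := p.prop
  rw [tsum_eq_sum (s := {0, 2}) (fun b hb => by
    have hb0 : b ≠ 0 := by simp at hb; tauto
    have hb2 : b ≠ 2 := by simp at hb; tauto
    rw [wf_prime_pow _ hp hb0, cA, if_neg (by tauto)])]
  rw [Finset.sum_pair (by norm_num)]
  rw [pow_zero, wf_one, wf_prime_pow _ hp (by norm_num), cA, Afun]
  by_cases h : (p : ℕ) % 3 = 2 <;> simp [h, sub_eq_add_neg]

lemma local_sum_wB (p : Nat.Primes) : ∑' e : ℕ, wf (cB z) ((p : ℕ) ^ e) = Bfun z p := by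
  have hp : (p : ℕ).Prime := p.prop
  rw [tsum_eq_sum (s := {0, 2, 3}) (fun b hb => by
    simp only [Finset.mem_insert, Finset.mem_singleton] at hb
    push_neg at hb
    rw [wf_prime_pow _ hp hb.1, cB, if_neg (by tauto), if_neg (by tauto)])]
  rw [Finset.sum_insert (by norm_num), Finset.sum_pair (by norm_num)]
  rw [pow_zero, wf_one, wf_prime_pow _ hp (by norm_num), wf_prime_pow _ hp (by norm_num), cB, cB]
  by_cases h : (p : ℕ) % 3 = 1 <;> simp [h, Bfun] <;> ring

lemma multipliable_Afun (hz : 1 < z.re) : Multipliable (Afun z) := by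
  have h := EulerProduct.eulerProduct_hasProd (wf_one (cA z))
    (fun {m n} hmn => by
      rcases eq_or_ne m 0 with rfl | hm
      · have : n = 1 := by simpa using hmn
        subst this; simp [wf_zero, wf_one]
      rcases eq_or_ne n 0 with rfl | hn
      · have : m = 1 := by simpa using hmn
        subst this; simp [wf_zero, wf_one]
      · exact wf_mul _ hmn hm hn)
    (summable_wf _ hz (hcA hz)) (wf_zero (cA z))
  have heq : (fun p : Nat.Primes => ∑' e, wf (cA z) ((p : ℕ) ^ e)) = Afun z :=
    funext fun p => local_sum_wA p
  rw [heq] at h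
  exact h.multipliable

lemma multipliable_Bfun (hz : 1 < z.re) : Multipliable (Bfun z) := by
  have h := EulerProduct.eulerProduct_hasProd (wf_one (cB z))
    (fun {m n} hmn => by
      rcases eq_or_ne m 0 with rfl | hm
      · have : n = 1 := by simpa using hmn
        subst this; simp [wf_zero, wf_one]
      rcases eq_or_ne n 0 with rfl | hn
      · have : m = 1 := by simpa using hmn
        subst this; simp [wf_zero, wf_one]
      · exact wf_mul _ hmn hm hn)
    (summable_wf _ hz (hcB hz)) (wf_zero (cB z))
  have heq : (fun p : Nat.Primes => ∑' e, wf (cB z) ((p : ℕ) ^ e)) = Bfun z :=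
    funext fun p => local_sum_wB p
  rw [heq] at h
  exact h.multipliable

end AB

section Chi

def chi (n : ℕ) : ℂ := if n % 3 = 1 then 1 else if n % 3 = 2 then -1 else 0

lemma chi_mul (m n : ℕ) : chi (m * n) = chi m * chi n := by
  have hmn : (m * n) % 3 = (m % 3) * (n % 3) % 3 := Nat.mul_mod m n 3
  have hm : m % 3 = 0 ∨ m % 3 = 1 ∨ m % 3 = 2 := by omega
  have hn : n % 3 = 0 ∨ n % 3 = 1 ∨ n % 3 = 2 := by omega
  rcases hm with h | h | h <;> rcases hn with h' | h' | h' <;>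
    simp [chi, hmn, h, h']

noncomputable def chiHom {z : ℂ} (hz0 : z ≠ 0) : ℕ →*₀ ℂ where
  toFun n := chi n * (n : ℂ) ^ (-z)
  map_zero' := by simp [chi]
  map_one' := by simp [chi]
  map_mul' m n := by
    have hN := map_mul (riemannZetaSummandHom hz0) m n
    simp only [riemannZetaSummandHom, MonoidWithZeroHom.coe_mk, ZeroHom.coe_mk] at hN
    show chi (m * n) * ((m * n : ℕ) : ℂ) ^ (-z) =
      (chi m * (m : ℂ) ^ (-z)) * (chi n * (n : ℂ) ^ (-z))
    rw [chi_mul, hN]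
    ring

lemma chiHom_apply {z : ℂ} (hz0 : z ≠ 0) (n : ℕ) :
    chiHom hz0 n = chi n * (n : ℂ) ^ (-z) := rfl

lemma summable_chiHom {z : ℂ} (hz : 1 < z.re) :
    Summable (fun n => ‖chiHom (ne_zero_of_one_lt_re hz) n‖) := by
  refine Summable.of_nonneg_of_le (fun _ => norm_nonneg _) (fun n => ?_)
    (summable_riemannZetaSummand hz)
  rw [chiHom_apply, norm_mul]
  simp only [riemannZetaSummandHom, MonoidWithZeroHom.coe_mk, ZeroHom.coe_mk]
  have hc : ‖chi n‖ ≤ 1 := by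
    rw [chi]
    split
    · simp
    split
    · simp
    · simp
  calc ‖chi n‖ * ‖(n : ℂ) ^ (-z)‖ ≤ 1 * ‖(n : ℂ) ^ (-z)‖ :=
        mul_le_mul_of_nonneg_right hc (norm_nonneg _)
  _ = ‖(n : ℂ) ^ (-z)‖ := one_mul _

lemma hasProd_chi {z : ℂ} (hz : 1 < z.re) :
    HasProd (fun p : Nat.Primes => (1 - chiHom (ne_zero_of_one_lt_re hz) (p : ℕ))⁻¹)
      (∑' n : ℕ, chi n * (n : ℂ) ^ (-z)) := by
  have h := EulerProduct.eulerProduct_completely_multiplicative_hasProd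
    (f := chiHom (ne_zero_of_one_lt_re hz)) (summable_chiHom hz)
  exact h

end Chi

theorem height_zeta_dirichlet_series (z : ℂ) (hz : 1 < z.re) :
    (∑' n : {n : ℕ // 0 < n ∧ ¬ 3 ∣ n}, (dFun n.1 : ℂ) * ((n.1 : ℕ) : ℂ) ^ (-z)) =
      (1 - (3 : ℂ) ^ (-z)) ^ 2 *
      (riemannZeta z *
        ∑' n : ℕ, (if n % 3 = 1 then (1 : ℂ) else if n % 3 = 2 then -1 else 0) *
          (n : ℂ) ^ (-z)) ^ 2 *
      (∏' q : {q : Nat.Primes // (q : ℕ) % 3 = 2}, (1 - ((q.1 : ℕ) : ℂ) ^ (-(2 * z)))) *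
      (∏' p : {p : Nat.Primes // (p : ℕ) % 3 = 1},
        (1 - 3 * ((p.1 : ℕ) : ℂ) ^ (-(2 * z)) + 2 * ((p.1 : ℕ) : ℂ) ^ (-(3 * z)))) := by
  have hz0 : z ≠ 0 := ne_zero_of_one_lt_re hz
  set χh := chiHom (ne_zero_of_one_lt_re hz) with hχh
  set p3 : Nat.Primes := ⟨3, Nat.prime_three⟩ with hp3
  -- Step 1: LHS as tsum of Ffun
  have hLHS : (∑' n : {n : ℕ // 0 < n ∧ ¬ 3 ∣ n}, (dFun n.1 : ℂ) * ((n.1 : ℕ) : ℂ) ^ (-z))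
      = ∑' n : ℕ, Ffun z n := by
    have h1 : ∀ n : {n : ℕ // 0 < n ∧ ¬ 3 ∣ n},
        (dFun n.1 : ℂ) * ((n.1 : ℕ) : ℂ) ^ (-z) = Ffun z n.1 := fun n => by
      rw [Ffun, if_neg n.2.2, DF_eq_dFun]
    rw [tsum_congr h1]
    refine Subtype.val_injective.tsum_eq ?_
    intro x hx
    by_cases hd : 3 ∣ x
    · exfalso; apply hx; rw [Ffun, if_pos hd, zero_mul]
    · have hx0 : 0 < x := by
        rcases Nat.eq_zero_or_pos x with rfl | h
        · exact absurd (dvd_zero 3) hd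
        · exact h
      exact ⟨⟨x, hx0, hd⟩, rfl⟩
  -- Step 2: character tsum
  have hLchi : (∑' n : ℕ, chi n * (n : ℂ) ^ (-z)) =
      ∑' n : ℕ, (if n % 3 = 1 then (1 : ℂ) else if n % 3 = 2 then -1 else 0) *
        (n : ℂ) ^ (-z) := tsum_congr fun n => by rw [chi]
  -- Step 3: subtype tprods
  have hAsub : (∏' q : {q : Nat.Primes // (q : ℕ) % 3 = 2},
      (1 - ((q.1 : ℕ) : ℂ) ^ (-(2 * z)))) = ∏' p : Nat.Primes, Afun z p := by
    rw [show (fun q : {q : Nat.Primes // (q : ℕ) % 3 = 2} =>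
        (1 - ((q.1 : ℕ) : ℂ) ^ (-(2 * z)))) = fun q => Afun z q.1 from
      funext fun q => by rw [Afun, if_pos q.prop]]
    refine Subtype.val_injective.tprod_eq ?_
    intro p hp
    have : (p : ℕ) % 3 = 2 := by
      by_contra h
      exact hp (by rw [Afun, if_neg h])
    exact ⟨⟨p, this⟩, rfl⟩
  have hBsub : (∏' p : {p : Nat.Primes // (p : ℕ) % 3 = 1},
      (1 - 3 * ((p.1 : ℕ) : ℂ) ^ (-(2 * z)) + 2 * ((p.1 : ℕ) : ℂ) ^ (-(3 * z))))
      = ∏' p : Nat.Primes, Bfun z p := by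
    rw [show (fun p : {p : Nat.Primes // (p : ℕ) % 3 = 1} =>
        (1 - 3 * ((p.1 : ℕ) : ℂ) ^ (-(2 * z)) + 2 * ((p.1 : ℕ) : ℂ) ^ (-(3 * z)))) =
        fun p => Bfun z p.1 from funext fun p => by rw [Bfun, if_pos p.prop]]
    refine Subtype.val_injective.tprod_eq ?_
    intro p hp
    have : (p : ℕ) % 3 = 1 := by
      by_contra h
      exact hp (by rw [Bfun, if_neg h])
    exact ⟨⟨p, this⟩, rfl⟩
  -- Step 4: the big HasProd on the RHS side
  have hZ := riemannZeta_eulerProduct_hasProd hz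
  have hX := hasProd_chi hz
  have hI : HasProd (fun p : Nat.Primes => if p = p3 then (1 - (3:ℂ) ^ (-z)) ^ 2 else 1)
      ((1 - (3:ℂ) ^ (-z)) ^ 2) := hasProd_ite_eq p3 _
  have hA := (multipliable_Afun hz).hasProd
  have hB := (multipliable_Bfun hz).hasProd
  have hRHS := ((((hZ.mul hX).mul (hZ.mul hX)).mul hI).mul hA).mul hB
  have eR := hRHS.tprod_eq
  have eL := (hasProd_Ffun hz).tprod_eq
  -- Step 5: local identity
  have hkey : ∀ p : Nat.Primes, (∑' e : ℕ, Ffun z ((p : ℕ) ^ e)) =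
      ((1 - ((p : ℕ) : ℂ) ^ (-z))⁻¹ * (1 - χh (p : ℕ))⁻¹ *
        ((1 - ((p : ℕ) : ℂ) ^ (-z))⁻¹ * (1 - χh (p : ℕ))⁻¹) *
        (if p = p3 then (1 - (3:ℂ) ^ (-z)) ^ 2 else 1)) * Afun z p * Bfun z p := by
    intro p
    have hp : (p : ℕ).Prime := p.prop
    set t : ℂ := ((p : ℕ) : ℂ) ^ (-z) with hts
    have hlt : ‖t‖ < 1 := norm_t_lt_one hz hp.one_lt
    have h1t : 1 - t ≠ 0 := by
      intro h
      have : t = 1 := by linear_combination -h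
      rw [this] at hlt; simp at hlt
    have hpow : ∀ k : ℕ, ((p : ℕ) : ℂ) ^ (-((k : ℕ) * z)) = t ^ k := fun k => by
      rw [hts, ← Complex.cpow_nat_mul]
      congr 1
      push_cast
      ring
    have hpow2 : ((p : ℕ) : ℂ) ^ (-(2 * z)) = t ^ 2 := by
      have := hpow 2; push_cast at this; exact this
    have hpow3 : ((p : ℕ) : ℂ) ^ (-(3 * z)) = t ^ 3 := by
      have := hpow 3; push_cast at this; exact this
    have hmod : (p : ℕ) % 3 = 0 ∨ (p : ℕ) % 3 = 1 ∨ (p : ℕ) % 3 = 2 := by omega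
    rcases hmod with h0 | h1 | h2
    · -- p = 3
      have hval : (p : ℕ) = 3 := by
        have h3 : (3 : ℕ) ∣ (p : ℕ) := Nat.dvd_of_mod_eq_zero h0
        exact ((Nat.prime_dvd_prime_iff_eq Nat.prime_three hp).mp h3).symm
      have hpp3 : p = p3 := Subtype.ext hval
      have hχ0 : χh (p : ℕ) = 0 := by
        rw [hχh, chiHom_apply, hval]
        simp [chi]
      rw [show (∑' e : ℕ, Ffun z ((p : ℕ) ^ e)) = 1 by
        rw [tsum_congr (fun e => by rw [hval]), local_sum_three]]
      rw [hχ0, if_pos hpp3, Afun, Bfun, hval]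
      norm_num
      have hc3 : ((3 : ℕ) : ℂ) = (3 : ℂ) := by norm_num
      have h1t3 : 1 - (3 : ℂ) ^ (-z) ≠ 0 := by rw [← hc3, ← hval]; exact h1t
      field_simp
      rw [hts, hval, hc3]
    · -- p ≡ 1
      have hne : p ≠ p3 := fun h => by rw [h] at h1; simp [hp3] at h1
      have hχ1 : χh (p : ℕ) = t := by
        rw [hχh, chiHom_apply, chi, if_pos h1]
        simp [hts]
      rw [local_sum_one hz hp h1, hχ1, if_neg hne, Afun, Bfun,
        if_neg (by omega : ¬ (p : ℕ) % 3 = 2), if_pos h1, hpow2, hpow3]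
      rw [← hts]
      field_simp
      ring
    · -- p ≡ 2
      have hne : p ≠ p3 := fun h => by rw [h] at h2; simp [hp3] at h2
      have hχ2 : χh (p : ℕ) = -t := by
        rw [hχh, chiHom_apply, chi, if_neg (by omega : ¬ (p : ℕ) % 3 = 1), if_pos h2]
        simp [hts]
      have h1pt : 1 + t ≠ 0 := by
        intro h
        have : t = -1 := by linear_combination h
        rw [this] at hlt; simp at hlt
      have h1t2 : 1 - t ^ 2 ≠ 0 := by
        have : 1 - t ^ 2 = (1 - t) * (1 + t) := by ring
        rw [this]
        exact mul_ne_zero h1t h1pt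
      rw [local_sum_two hz hp h2, hχ2, if_neg hne, Afun, Bfun,
        if_pos h2, if_neg (by omega : ¬ (p : ℕ) % 3 = 1), hpow2]
      rw [← hts]
      field_simp
      have hsq : (1 + t * 2 + t ^ 2) ≠ 0 := by
        rw [show 1 + t * 2 + t ^ 2 = (1 + t) ^ 2 by ring]; exact pow_ne_zero _ h1pt
      linear_combination (-(1 - t * 2 + t ^ 2)) * mul_inv_cancel₀ hsq
  -- Step 6: conclude
  rw [hLHS, ← eL, tprod_congr hkey, eR, ← hLchi, hAsub, hBsub]
  ring
end
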